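/- arXiv:1712.09881 — 3 statements merged into one kernel-verified Lean document; each statement's English description precedes it below -/
import Mathlib

section
/- Let (Z,(X,Y)) be a hidden Markov model with finite-state aperiodic irreducible hidden chain Z, and suppose there exist a letter a and indices i, j with P(X_i = Y_j = a) > 0. Then γ* := lim_{n→∞} E[LC_n]/n exists and γ* > 0. -/
/-!
Write `a n = E[LC_n]` and `F n s` for the expected LCS of `n` consecutive emissions of the chain
started in state `s`. The mean LCS of the block of times `m + 1, …, m + n` is the average of `F n`
against the law of `Z (m + 1)`. Prepending one step changes an LCS by at most 2, so `F (n + 1)`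
lies between `P F n` and `2 + P F n`; as all entries of `P ^ k` are at least `ε`, `P ^ k`
contracts oscillations by the factor `1 - ε |S|`, so the oscillation of `F n` stays bounded by
some `C`. Hence every block mean is at least `a n - C`, and splitting a word into two blocks gives
`a (m + n) ≥ a m + a n - C`; by Fekete's lemma `a n / n` converges to `γ = sup (a n - C) / n`.
Finally every block starting after time `k` has mean at least `ε P(X_i = Y_j = a)`, so `a` grows
linearly and `γ > 0`.
-/

open MeasureTheory Filter

/-- Length of the longest common subsequence of two words. -/
def LCS {α : Type*} [DecidableEq α] (x y : List α) : ℕ :=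
  ((x.sublists.filter (fun s => decide (s.Sublist y))).map List.length).foldr max 0

/-- The word `X_a, …, X_{a+len-1}` of the (1-indexed) sequence `X`. -/
def word {α : Type*} (X : ℕ → α) (a len : ℕ) : List α :=
  (List.range len).map (fun i => X (a + i))

section LongestCommonSubsequence

variable {α : Type*} [DecidableEq α] {s x y u v : List α} {a : α} {n : ℕ}

theorem List.Sublist.length_le_LCS (hx : s.Sublist x) (hy : s.Sublist y) :
    s.length ≤ LCS x y :=
  List.le_max_of_le (List.mem_map.2 ⟨s, by simp [List.mem_sublists, hx, hy], rfl⟩) le_rfl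

theorem LCS_le (h : ∀ s : List α, s.Sublist x → s.Sublist y → s.length ≤ n) : LCS x y ≤ n :=
  List.max_le_of_forall_le _ _ fun _ hm => by
    obtain ⟨s, hs, rfl⟩ := List.mem_map.1 hm
    simp only [List.mem_filter, List.mem_sublists, decide_eq_true_eq] at hs
    exact h s hs.1 hs.2

theorem exists_sublist_length_eq_LCS (x y : List α) :
    ∃ s : List α, s.Sublist x ∧ s.Sublist y ∧ s.length = LCS x y := by
  have hne : (x.sublists.filter fun s => decide (s.Sublist y)).map List.length ≠ [] := by
    simpa [List.filter_eq_nil_iff] using ⟨[], by simp⟩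
  obtain ⟨s, hs, hlen⟩ := List.mem_map.1 (List.maximum_mem (List.foldr_max_of_ne_nil hne).symm)
  simp only [List.mem_filter, List.mem_sublists, decide_eq_true_eq] at hs
  exact ⟨s, hs.1, hs.2, hlen⟩

theorem LCS_le_length_left : LCS x y ≤ x.length :=
  LCS_le fun _ hx _ => hx.length_le

theorem LCS_mono (hx : x.Sublist u) (hy : y.Sublist v) : LCS x y ≤ LCS u v := by
  obtain ⟨s, hsx, hsy, hs⟩ := exists_sublist_length_eq_LCS x y
  exact hs ▸ (hsx.trans hx).length_le_LCS (hsy.trans hy)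

theorem LCS_add_LCS_le_LCS_append : LCS x y + LCS u v ≤ LCS (x ++ u) (y ++ v) := by
  obtain ⟨s, hsx, hsy, hs⟩ := exists_sublist_length_eq_LCS x y
  obtain ⟨t, htu, htv, ht⟩ := exists_sublist_length_eq_LCS u v
  simpa [← hs, ← ht] using (hsx.append htu).length_le_LCS (hsy.append htv)

theorem LCS_cons_left_le : LCS (a :: x) y ≤ LCS x y + 1 :=
  LCS_le fun s hx hy => by
    have := hx.tail.length_le_LCS (s.tail_sublist.trans hy)
    simp only [List.tail_cons, List.length_tail] at this
    omega

theorem LCS_cons_right_le : LCS x (a :: y) ≤ LCS x y + 1 :=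
  LCS_le fun s hx hy => by
    have := (s.tail_sublist.trans hx).length_le_LCS hy.tail
    simp only [List.tail_cons, List.length_tail] at this
    omega

theorem one_le_LCS (hx : a ∈ x) (hy : a ∈ y) : 1 ≤ LCS x y :=
  (List.singleton_sublist.2 hx).length_le_LCS (List.singleton_sublist.2 hy)

end LongestCommonSubsequence

theorem sum_sub_mul_le_of_le {ι : Type*} [Fintype ι] {p q f : ι → ℝ} {ε C : ℝ}
    (hp : ∀ t, ε ≤ p t) (hq : ∀ t, ε ≤ q t) (hp1 : ∑ t, p t = 1) (hq1 : ∑ t, q t = 1)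
    (hf : ∀ t t', f t - f t' ≤ C) :
    ∑ t, (p t - q t) * f t ≤ (1 - ε * Fintype.card ι) * C := by
  have hne : (Finset.univ : Finset ι).Nonempty :=
    Finset.nonempty_of_sum_ne_zero (hp1.symm ▸ one_ne_zero)
  obtain ⟨t₀, -, ht₀⟩ := Finset.exists_min_image Finset.univ f hne
  have hshift : ∑ t, (p t - q t) * f t = ∑ t, (p t - q t) * (f t - f t₀) := by
    simp only [mul_sub, Finset.sum_sub_distrib, ← Finset.sum_mul, hp1, hq1, sub_self, zero_mul,
      sub_zero]
  calc ∑ t, (p t - q t) * f t = ∑ t, (p t - q t) * (f t - f t₀) := hshift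
    _ ≤ ∑ t, (p t - ε) * C := Finset.sum_le_sum fun t _ => by
      calc (p t - q t) * (f t - f t₀) ≤ (p t - ε) * (f t - f t₀) := by
            gcongr
            · linarith [ht₀ t (Finset.mem_univ t)]
            · exact hq t
        _ ≤ (p t - ε) * C := by
            gcongr
            · linarith [hp t]
            · exact hf t t₀
    _ = (1 - ε * Fintype.card ι) * C := by
      rw [← Finset.sum_mul, Finset.sum_sub_distrib, hp1, Finset.sum_const, Finset.card_univ,
        nsmul_eq_mul, mul_comm ε]

namespace Matrix

variable {S : Type*} [Fintype S] {M : Matrix S S ℝ}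

theorem mulVec_sub_mulVec_apply (g : S → ℝ) (s s' : S) :
    (M *ᵥ g) s - (M *ᵥ g) s' = ∑ t, (M s t - M s' t) * g t := by
  simp [mulVec, dotProduct, sub_mul, Finset.sum_sub_distrib]

variable [DecidableEq S]

theorem mulVec_mono_of_mem_rowStochastic (hM : M ∈ rowStochastic ℝ S) {g h : S → ℝ}
    (hgh : g ≤ h) : M *ᵥ g ≤ M *ᵥ h := fun _ =>
  Finset.sum_le_sum fun t _ => mul_le_mul_of_nonneg_left (hgh t) (nonneg_of_mem_rowStochastic hM)

theorem mulVec_add_const_of_mem_rowStochastic (hM : M ∈ rowStochastic ℝ S) (g : S → ℝ) (c : ℝ) :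
    M *ᵥ (g + fun _ => c) = M *ᵥ g + fun _ => c := by
  ext s
  simp [mulVec, dotProduct, mul_add, Finset.sum_add_distrib, ← Finset.sum_mul,
    sum_row_of_mem_rowStochastic hM]

variable {f : ℕ → S → ℝ} {c : ℝ}

theorem pow_mulVec_le_of_mulVec_le (hM : M ∈ rowStochastic ℝ S)
    (hlow : ∀ n, M *ᵥ f n ≤ f (n + 1)) (hup : ∀ n, f (n + 1) ≤ M *ᵥ f n + fun _ => c)
    (n k : ℕ) : M ^ k *ᵥ f n ≤ f (n + k) ∧ f (n + k) ≤ M ^ k *ᵥ f n + fun _ => k * c := by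
  induction k with
  | zero => constructor <;> intro s <;> simp
  | succ k ih =>
    rw [pow_succ', ← mulVec_mulVec, ← add_assoc]
    constructor
    · exact (mulVec_mono_of_mem_rowStochastic hM ih.1).trans (hlow _)
    · calc f (n + k + 1) ≤ M *ᵥ f (n + k) + fun _ => c := hup _
        _ ≤ M *ᵥ (M ^ k *ᵥ f n + fun _ => k * c) + fun _ => c :=
          add_le_add_left (mulVec_mono_of_mem_rowStochastic hM ih.2) _
        _ = M *ᵥ (M ^ k *ᵥ f n) + fun _ => (k + 1 : ℕ) * c := by
          rw [mulVec_add_const_of_mem_rowStochastic hM, add_assoc]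
          congr 1
          ext
          simp only [Pi.add_apply]
          push_cast
          ring

theorem sub_le_add_sum_mul_of_mulVec_le (hM : M ∈ rowStochastic ℝ S)
    (hlow : ∀ n, M *ᵥ f n ≤ f (n + 1)) (hup : ∀ n, f (n + 1) ≤ M *ᵥ f n + fun _ => c)
    (n j : ℕ) (s s' : S) :
    f (n + j) s - f (n + j) s' ≤ j * c + ∑ t, ((M ^ j) s t - (M ^ j) s' t) * f n t := by
  have h := pow_mulVec_le_of_mulVec_le hM hlow hup n j
  have hs := h.2 s
  rw [Pi.add_apply] at hs
  linarith [h.1 s', mulVec_sub_mulVec_apply (M := M ^ j) (f n) s s']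

theorem exists_forall_sub_le_of_mulVec_le (hM : M ∈ rowStochastic ℝ S) {k : ℕ} (hk : 0 < k)
    {ε : ℝ} (hε : 0 < ε) (hMk : ∀ s t, ε ≤ (M ^ k) s t)
    (hlow : ∀ n, M *ᵥ f n ≤ f (n + 1)) (hup : ∀ n, f (n + 1) ≤ M *ᵥ f n + fun _ => c) :
    ∃ C, ∀ n s s', f n s - f n s' ≤ C := by
  rcases isEmpty_or_nonempty S with hS | hS
  · exact ⟨0, fun _ s => isEmptyElim s⟩
  obtain ⟨s₀⟩ := id hS
  have hc : 0 ≤ c := by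
    have h := hup 0 s₀
    simp only [Pi.add_apply] at h
    linarith [hlow 0 s₀]
  obtain ⟨tmax, htmax⟩ := Finite.exists_max (f 0)
  obtain ⟨tmin, htmin⟩ := Finite.exists_min (f 0)
  have hf₀ : ∀ t t', f 0 t - f 0 t' ≤ f 0 tmax - f 0 tmin := fun t t' => by
    linarith [htmax t, htmin t']
  have hrow : ∀ j s, ∑ t, (M ^ j) s t = 1 := fun j =>
    sum_row_of_mem_rowStochastic (pow_mem hM j)
  have hκ : 0 < ε * Fintype.card S := mul_pos hε (by exact_mod_cast Fintype.card_pos)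
  set C := max (k * c + (f 0 tmax - f 0 tmin)) (k * c / (ε * Fintype.card S))
  have hC₀ : k * c + (f 0 tmax - f 0 tmin) ≤ C := le_max_left _ _
  have hkC : k * c ≤ ε * Fintype.card S * C := (div_le_iff₀' hκ).1 (le_max_right _ _)
  -- Below `k` the oscillation of `f n` exceeds that of `f 0` by at most `n * c`; from `k` on,
  -- the contraction by `M ^ k` absorbs the drift `k * c` thanks to `hkC`.
  refine ⟨C, fun n => ?_⟩
  induction n using Nat.strong_induction_on with
  | _ n ih =>
    intro s s'
    by_cases hn : n < k
    · have hmix := sum_sub_mul_le_of_le (fun t => nonneg_of_mem_rowStochastic (pow_mem hM n))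
        (fun t => nonneg_of_mem_rowStochastic (pow_mem hM n)) (hrow n s) (hrow n s') hf₀
      have hnk : (n : ℝ) * c ≤ k * c := by gcongr
      simp only [zero_mul, sub_zero, one_mul] at hmix
      have := sub_le_add_sum_mul_of_mulVec_le hM hlow hup 0 n s s'
      rw [zero_add] at this
      linarith
    · obtain ⟨m, rfl⟩ := Nat.exists_eq_add_of_le' (not_lt.1 hn)
      have hmix := sum_sub_mul_le_of_le (hMk s) (hMk s') (hrow k s) (hrow k s')
        (ih m (by omega))
      linarith [sub_le_add_sum_mul_of_mulVec_le hM hlow hup m k s s']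

end Matrix

section PathLCS

variable {S A : Type*} [DecidableEq A]

def pathLCS {n : ℕ} (v : Fin n → S × A × A) : ℕ :=
  LCS (List.ofFn fun t => (v t).2.1) (List.ofFn fun t => (v t).2.2)

theorem pathLCS_tail_le {n : ℕ} (v : Fin (n + 1) → S × A × A) :
    pathLCS (Fin.tail v) ≤ pathLCS v := by
  simp only [pathLCS, List.ofFn_succ]
  exact LCS_mono (List.sublist_cons_self _ _) (List.sublist_cons_self _ _)

theorem pathLCS_le_tail_add_two {n : ℕ} (v : Fin (n + 1) → S × A × A) :
    pathLCS v ≤ pathLCS (Fin.tail v) + 2 := by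
  simp only [pathLCS, List.ofFn_succ, Fin.tail]
  linarith [LCS_cons_left_le (a := (v 0).2.1) (x := List.ofFn fun t => (v t.succ).2.1)
      (y := (v 0).2.2 :: List.ofFn fun t => (v t.succ).2.2),
    LCS_cons_right_le (a := (v 0).2.2) (x := List.ofFn fun t => (v t.succ).2.1)
      (y := List.ofFn fun t => (v t.succ).2.2)]

end PathLCS

section PathExpectation

open Matrix

variable {S A : Type*} [Fintype S] [Fintype A] (P : Matrix S S ℝ) (e : S → A → A → ℝ)

/-- `pathExp P e n s φ` is the expectation of `φ` applied to the first `n` (state, emission)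
pairs of the hidden Markov chain with transition matrix `P` and emission law `e` started at `s`. -/
def pathExp : (n : ℕ) → S → ((Fin n → S × A × A) → ℝ) → ℝ
  | 0, _, φ => φ Fin.elim0
  | n + 1, s, φ => ∑ x, ∑ y, e s x y * ∑ s', P s s' *
      pathExp n s' fun u => φ (Fin.cons (s, x, y) u : Fin (n + 1) → S × A × A)

variable {P e}

theorem pathExp_succ_tail (he₁ : ∀ s, ∑ x, ∑ y, e s x y = 1) {n : ℕ} {s : S}
    (φ : (Fin n → S × A × A) → ℝ) :
    pathExp P e (n + 1) s (fun v => φ (Fin.tail v)) = (P *ᵥ fun s' => pathExp P e n s' φ) s := by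
  simp only [pathExp, Fin.tail_cons, ← Finset.sum_mul, he₁, one_mul]
  rfl

variable [DecidableEq S] (hP : P ∈ rowStochastic ℝ S)
  (he₀ : ∀ s x y, 0 ≤ e s x y) (he₁ : ∀ s, ∑ x, ∑ y, e s x y = 1)

include hP he₀ in
theorem pathExp_mono {n : ℕ} {s : S} {φ ψ : (Fin n → S × A × A) → ℝ} (h : ∀ v, φ v ≤ ψ v) :
    pathExp P e n s φ ≤ pathExp P e n s ψ := by
  induction n generalizing s with
  | zero => exact h _
  | succ n ih =>
    refine Finset.sum_le_sum fun x _ => Finset.sum_le_sum fun y _ => ?_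
    refine mul_le_mul_of_nonneg_left (Finset.sum_le_sum fun s' _ => ?_) (he₀ s x y)
    exact mul_le_mul_of_nonneg_left (ih fun u => h _) (nonneg_of_mem_rowStochastic hP)

include hP he₁ in
theorem pathExp_add_const {n : ℕ} {s : S} (φ : (Fin n → S × A × A) → ℝ) (c : ℝ) :
    pathExp P e n s (fun v => c + φ v) = c + pathExp P e n s φ := by
  induction n generalizing s with
  | zero => rfl
  | succ n ih =>
    simp only [pathExp, ih, mul_add, Finset.sum_add_distrib, ← Finset.sum_mul,
      sum_row_of_mem_rowStochastic hP, one_mul, he₁]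

include hP he₁ in
theorem pathExp_const {n : ℕ} {s : S} (c : ℝ) : pathExp P e n s (fun _ => c) = c := by
  induction n generalizing s with
  | zero => rfl
  | succ n ih =>
    simp only [pathExp, ih, ← Finset.sum_mul, sum_row_of_mem_rowStochastic hP, one_mul, he₁]

end PathExpectation

section LCSMean

open Matrix

variable {S A : Type*} [Fintype S] [DecidableEq S] [Fintype A] [DecidableEq A]
  {P : Matrix S S ℝ} {e : S → A → A → ℝ}

variable (P e) in
def lcsMean (n : ℕ) (s : S) : ℝ := pathExp P e n s fun v => pathLCS v

variable (hP : P ∈ rowStochastic ℝ S) (he₀ : ∀ s x y, 0 ≤ e s x y)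
  (he₁ : ∀ s, ∑ x, ∑ y, e s x y = 1)
include hP he₀ he₁

theorem lcsMean_nonneg (n : ℕ) (s : S) : 0 ≤ lcsMean P e n s :=
  (pathExp_const hP he₁ 0).ge.trans
    (pathExp_mono hP he₀ fun v => Nat.cast_nonneg (pathLCS v))

theorem mulVec_lcsMean_le (n : ℕ) : P *ᵥ lcsMean P e n ≤ lcsMean P e (n + 1) := fun s =>
  calc (P *ᵥ lcsMean P e n) s = pathExp P e (n + 1) s fun v => (pathLCS (Fin.tail v) : ℝ) :=
        (pathExp_succ_tail he₁ _).symm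
    _ ≤ lcsMean P e (n + 1) s :=
        pathExp_mono hP he₀ fun v => by exact_mod_cast pathLCS_tail_le v

theorem lcsMean_succ_le (n : ℕ) :
    lcsMean P e (n + 1) ≤ P *ᵥ lcsMean P e n + fun _ => 2 := fun s => by
  rw [Pi.add_apply, add_comm ((P *ᵥ lcsMean P e n) s)]
  calc lcsMean P e (n + 1) s ≤ pathExp P e (n + 1) s fun v => 2 + (pathLCS (Fin.tail v) : ℝ) :=
        pathExp_mono hP he₀ fun v => by
          rw [add_comm (2 : ℝ)]
          exact_mod_cast pathLCS_le_tail_add_two v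
    _ = 2 + (P *ᵥ lcsMean P e n) s := by
        rw [pathExp_add_const hP he₁ (fun v => (pathLCS (Fin.tail v) : ℝ))]
        exact congrArg (2 + ·) (pathExp_succ_tail he₁ fun u => (pathLCS u : ℝ))

theorem exists_lcsMean_sub_le {k : ℕ} (hk : 0 < k) {ε : ℝ} (hε : 0 < ε)
    (hPk : ∀ s t, ε ≤ (P ^ k) s t) : ∃ C, ∀ n s s', lcsMean P e n s - lcsMean P e n s' ≤ C :=
  exists_forall_sub_le_of_mulVec_le hP hk hε hPk (mulVec_lcsMean_le hP he₀ he₁)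
    (lcsMean_succ_le hP he₀ he₁)

end LCSMean

theorem MeasureTheory.sum_measureReal_inter_preimage_singleton {Ω β : Type*} [MeasurableSpace Ω]
    [Fintype β] [MeasurableSpace β] [MeasurableSingletonClass β] {μ : Measure Ω}
    [IsFiniteMeasure μ] {f : Ω → β} (hf : Measurable f) (H : Set Ω) :
    ∑ b, μ.real (H ∩ f ⁻¹' {b}) = μ.real H := by
  have := sum_measureReal_preimage_singleton (μ := μ.restrict H) Finset.univ
    fun b _ => hf (measurableSet_singleton b)
  simpa [measureReal_restrict_apply (hf (measurableSet_singleton _)), Set.inter_comm] using this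

theorem MeasureTheory.integral_comp_eq_sum {Ω β : Type*} [MeasurableSpace Ω] [Fintype β]
    [MeasurableSpace β] [MeasurableSingletonClass β] {μ : Measure Ω} [IsFiniteMeasure μ]
    {V : Ω → β} (hV : Measurable V) (φ : β → ℝ) :
    ∫ ω, φ (V ω) ∂μ = ∑ v, φ v * μ.real (V ⁻¹' {v}) := by
  rw [← integral_map hV.aemeasurable (measurable_of_finite φ).aestronglyMeasurable,
    integral_fintype .of_finite]
  simp [Measure.real, Measure.map_apply hV (measurableSet_singleton _), mul_comm]

section HiddenMarkovModel

open Matrix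

variable {Ω S A : Type*}

def history (Z : ℕ → Ω → S) (X Y : ℕ → Ω → A) (n : ℕ) (ω : Ω) : Fin n → S × A × A :=
  fun i => (Z (i + 1) ω, X (i + 1) ω, Y (i + 1) ω)

def block (Z : ℕ → Ω → S) (X Y : ℕ → Ω → A) (m n : ℕ) (ω : Ω) : Fin n → S × A × A :=
  fun i => (Z (m + 1 + i) ω, X (m + 1 + i) ω, Y (m + 1 + i) ω)

variable {Z : ℕ → Ω → S} {X Y : ℕ → Ω → A}

theorem block_succ (m n : ℕ) (ω : Ω) :
    block Z X Y m (n + 1) ω =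
      Fin.cons (Z (m + 1) ω, X (m + 1) ω, Y (m + 1) ω) (block Z X Y (m + 1) n ω) := by
  ext i : 1
  refine Fin.cases rfl (fun i => ?_) i
  simp only [block, Fin.cons_succ, Fin.val_succ, show m + 1 + (i + 1) = m + 1 + 1 + i by omega]

theorem history_succ_preimage (N : ℕ) (B : Set (Fin N → S × A × A)) (c : S × A × A) :
    history Z X Y (N + 1) ⁻¹' {w | Fin.init w ∈ B ∧ w (Fin.last N) = c} =
      history Z X Y N ⁻¹' B ∩ {ω | (Z (N + 1) ω, X (N + 1) ω, Y (N + 1) ω) = c} :=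
  rfl

variable [MeasurableSpace Ω]

structure IsHiddenMarkov (ℙ : Measure Ω) (Z : ℕ → Ω → S) (X Y : ℕ → Ω → A)
    (P : Matrix S S ℝ) (e : S → A → A → ℝ) : Prop where
  transition : ∀ (n : ℕ) (z z' : S) (B : Set (Fin (n + 1) → S × A × A)),
    ℙ ({ω | Z (n + 2) ω = z'} ∩ ({ω | Z (n + 1) ω = z} ∩ history Z X Y (n + 1) ⁻¹' B)) =
      ENNReal.ofReal (P z z') * ℙ ({ω | Z (n + 1) ω = z} ∩ history Z X Y (n + 1) ⁻¹' B)
  emission : ∀ (n : ℕ) (x y : A) (z : S) (B : Set (Fin n → S × A × A)),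
    ℙ ({ω | X (n + 1) ω = x ∧ Y (n + 1) ω = y} ∩ ({ω | Z (n + 1) ω = z} ∩ history Z X Y n ⁻¹' B)) =
      ENNReal.ofReal (e z x y) * ℙ ({ω | Z (n + 1) ω = z} ∩ history Z X Y n ⁻¹' B)

variable {ℙ : Measure Ω} {P : Matrix S S ℝ} {e : S → A → A → ℝ}

namespace IsHiddenMarkov

variable (h : IsHiddenMarkov ℙ Z X Y P e)
include h

theorem measureReal_inter_emission (he₀ : ∀ s x y, 0 ≤ e s x y) (N : ℕ)
    (B : Set (Fin N → S × A × A)) (c : S × A × A) :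
    ℙ.real (history Z X Y N ⁻¹' B ∩ {ω | (Z (N + 1) ω, X (N + 1) ω, Y (N + 1) ω) = c}) =
      e c.1 c.2.1 c.2.2 * ℙ.real (history Z X Y N ⁻¹' B ∩ Z (N + 1) ⁻¹' {c.1}) := by
  have hset : history Z X Y N ⁻¹' B ∩ {ω | (Z (N + 1) ω, X (N + 1) ω, Y (N + 1) ω) = c} =
      {ω | X (N + 1) ω = c.2.1 ∧ Y (N + 1) ω = c.2.2} ∩
        ({ω | Z (N + 1) ω = c.1} ∩ history Z X Y N ⁻¹' B) := by
    ext ω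
    simp only [Set.mem_inter_iff, Set.mem_preimage, Set.mem_ofPred_eq, Prod.ext_iff]
    tauto
  rw [measureReal_def, hset, h.emission, ENNReal.toReal_mul, ENNReal.toReal_ofReal (he₀ _ _ _),
    Set.inter_comm, measureReal_def]
  rfl

theorem measureReal_inter_transition [DecidableEq S] [Fintype S]
    (hP : P ∈ rowStochastic ℝ S) (he₀ : ∀ s x y, 0 ≤ e s x y) (N : ℕ)
    (B : Set (Fin N → S × A × A)) (c : S × A × A) (s' : S) :
    ℙ.real (history Z X Y (N + 1) ⁻¹' {w | Fin.init w ∈ B ∧ w (Fin.last N) = c} ∩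
        Z (N + 2) ⁻¹' {s'}) =
      P c.1 s' * (e c.1 c.2.1 c.2.2 * ℙ.real (history Z X Y N ⁻¹' B ∩ Z (N + 1) ⁻¹' {c.1})) := by
  set H := history Z X Y (N + 1) ⁻¹' {w | Fin.init w ∈ B ∧ w (Fin.last N) = c}
  have hH : H ⊆ {ω | Z (N + 1) ω = c.1} := fun ω hω => congrArg Prod.fst hω.2
  have hset : H ∩ Z (N + 2) ⁻¹' {s'} = {ω | Z (N + 2) ω = s'} ∩ ({ω | Z (N + 1) ω = c.1} ∩ H) := by
    rw [Set.inter_eq_right.2 hH, Set.inter_comm]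
    rfl
  rw [measureReal_def, hset, h.transition, ENNReal.toReal_mul,
    ENNReal.toReal_ofReal (nonneg_of_mem_rowStochastic hP), Set.inter_eq_right.2 hH,
    ← measureReal_def]
  exact congrArg _ (h.measureReal_inter_emission he₀ N B c)

variable [DecidableEq S] [Fintype S] [Fintype A] [MeasurableSpace S] [MeasurableSingletonClass S]
  [IsFiniteMeasure ℙ] (hZ : ∀ n, Measurable (Z n)) (hP : P ∈ rowStochastic ℝ S)
  (he₀ : ∀ s x y, 0 ≤ e s x y)
include hZ hP he₀

theorem sum_mul_measureReal_inter_block (n N : ℕ) (B : Set (Fin N → S × A × A))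
    (φ : (Fin n → S × A × A) → ℝ) :
    ∑ v, φ v * ℙ.real (history Z X Y N ⁻¹' B ∩ block Z X Y N n ⁻¹' {v}) =
      ∑ s, ℙ.real (history Z X Y N ⁻¹' B ∩ Z (N + 1) ⁻¹' {s}) * pathExp P e n s φ := by
  induction n generalizing N with
  | zero =>
    have hblock : ∀ v, block Z X Y N 0 ⁻¹' {v} = Set.univ := fun v =>
      Set.eq_univ_of_forall fun ω => Subsingleton.elim _ _
    simp only [hblock, Set.inter_univ, Fintype.sum_unique, pathExp, ← Finset.sum_mul,
      sum_measureReal_inter_preimage_singleton (hZ (N + 1)), Subsingleton.elim default Fin.elim0]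
    ring
  | succ n ih =>
    have hblock : ∀ c u, history Z X Y N ⁻¹' B ∩ block Z X Y N (n + 1) ⁻¹' {Fin.cons c u} =
        history Z X Y (N + 1) ⁻¹' {w | Fin.init w ∈ B ∧ w (Fin.last N) = c} ∩
          block Z X Y (N + 1) n ⁻¹' {u} := fun c u => by
      ext ω
      rw [history_succ_preimage]
      simp only [Set.mem_inter_iff, Set.mem_preimage, Set.mem_singleton_iff, Set.mem_ofPred_eq,
        block_succ, Fin.cons_inj, and_assoc]
    calc ∑ v, φ v * ℙ.real (history Z X Y N ⁻¹' B ∩ block Z X Y N (n + 1) ⁻¹' {v})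
        = ∑ c : S × A × A, ∑ s', P c.1 s' * (e c.1 c.2.1 c.2.2 *
            ℙ.real (history Z X Y N ⁻¹' B ∩ Z (N + 1) ⁻¹' {c.1})) *
              pathExp P e n s' fun u => φ (Fin.cons c u) := by
          rw [← (Fin.consEquiv fun _ => S × A × A).sum_comp, Fintype.sum_prod_type]
          refine Finset.sum_congr rfl fun c _ => ?_
          change ∑ u, φ (Fin.cons c u) * ℙ.real
            (history Z X Y N ⁻¹' B ∩ block Z X Y N (n + 1) ⁻¹' {Fin.cons c u}) = _
          simp only [hblock, ih, h.measureReal_inter_transition hP he₀]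
      _ = _ := by
          simp only [Fintype.sum_prod_type, pathExp, Finset.mul_sum]
          refine Finset.sum_congr rfl fun s _ => Finset.sum_congr rfl fun x _ =>
            Finset.sum_congr rfl fun y _ => Finset.sum_congr rfl fun s' _ => ?_
          ring

end IsHiddenMarkov

end HiddenMarkovModel

section LCSBlockMean

variable {Ω S A : Type*} [MeasurableSpace Ω] [DecidableEq A] {ℙ : Measure Ω} {X Y : ℕ → Ω → A}

theorem word_eq_ofFn {α : Type*} (x : ℕ → α) (a n : ℕ) :
    word x a n = List.ofFn fun t : Fin n => x (a + t) := by
  apply List.ext_getElem <;> simp [word]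

theorem word_add {α : Type*} (x : ℕ → α) (a n n' : ℕ) :
    word x a (n + n') = word x a n ++ word x (a + n) n' := by
  simp [word, List.range_add, List.map_map, Function.comp_def, add_assoc]

theorem LCS_word_le {α : Type*} [DecidableEq α] (x y : ℕ → α) (a n : ℕ) :
    LCS (word x a n) (word y a n) ≤ n :=
  LCS_le_length_left.trans (by simp [word])

variable (ℙ X Y) in
noncomputable def blockMean (m n : ℕ) : ℝ :=
  ∫ ω, (LCS (word (fun i => X i ω) (m + 1) n) (word (fun i => Y i ω) (m + 1) n) : ℝ) ∂ℙ

theorem blockMean_nonneg (m n : ℕ) : 0 ≤ blockMean ℙ X Y m n :=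
  integral_nonneg fun _ => Nat.cast_nonneg _

theorem blockMean_le [IsProbabilityMeasure ℙ] (m n : ℕ) : blockMean ℙ X Y m n ≤ n := by
  refine (integral_mono_of_nonneg (ae_of_all _ fun _ => Nat.cast_nonneg _)
    (integrable_const (n : ℝ)) (ae_of_all _ fun ω => ?_)).trans_eq (by simp)
  dsimp only
  exact_mod_cast LCS_word_le _ _ _ _

variable [MeasurableSpace A] [MeasurableSingletonClass A] [Fintype A]
  (hX : ∀ n, Measurable (X n)) (hY : ∀ n, Measurable (Y n))
include hX hY

theorem integrable_LCS_word [IsFiniteMeasure ℙ] (a n : ℕ) :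
    Integrable (fun ω => (LCS (word (fun i => X i ω) a n) (word (fun i => Y i ω) a n) : ℝ)) ℙ := by
  have hmeas : Measurable fun ω =>
      (LCS (word (fun i => X i ω) a n) (word (fun i => Y i ω) a n) : ℝ) := by
    have hV : Measurable fun ω (t : Fin n) => (X (a + t) ω, Y (a + t) ω) :=
      measurable_pi_lambda _ fun t => (hX _).prodMk (hY _)
    convert (measurable_of_finite fun p : Fin n → A × A =>
      (LCS (List.ofFn fun t => (p t).1) (List.ofFn fun t => (p t).2) : ℝ)).comp hV using 1
    funext ω
    simp [word_eq_ofFn]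
  refine .of_bound hmeas.aestronglyMeasurable n (ae_of_all _ fun ω => ?_)
  simpa using LCS_word_le (fun i => X i ω) (fun i => Y i ω) a n

theorem blockMean_add_le [IsFiniteMeasure ℙ] (m n n' : ℕ) :
    blockMean ℙ X Y m n + blockMean ℙ X Y (m + n) n' ≤ blockMean ℙ X Y m (n + n') := by
  rw [blockMean, blockMean, ← integral_add (integrable_LCS_word hX hY _ _)
    (integrable_LCS_word hX hY _ _)]
  refine integral_mono ((integrable_LCS_word hX hY _ _).add (integrable_LCS_word hX hY _ _))
    (integrable_LCS_word hX hY _ _) fun ω => ?_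
  simp only [word_add, show m + 1 + n = m + n + 1 by omega]
  exact_mod_cast LCS_add_LCS_le_LCS_append

theorem measureReal_le_blockMean [IsFiniteMeasure ℙ] {a : A} {i j L : ℕ} (hi : 1 ≤ i) (hj : 1 ≤ j)
    (hiL : i ≤ L) (hjL : j ≤ L) : ℙ.real {ω | X i ω = a ∧ Y j ω = a} ≤ blockMean ℙ X Y 0 L := by
  have hE : MeasurableSet {ω | X i ω = a ∧ Y j ω = a} :=
    (hX i (measurableSet_singleton a)).inter (hY j (measurableSet_singleton a))
  rw [← integral_indicator_one hE]
  refine integral_mono_of_nonneg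
    (ae_of_all _ fun ω => Set.indicator_nonneg (fun _ _ => zero_le_one) ω)
    (integrable_LCS_word hX hY _ _) (ae_of_all _ fun ω => ?_)
  by_cases hω : ω ∈ {ω | X i ω = a ∧ Y j ω = a}
  · rw [Set.indicator_of_mem hω, Pi.one_apply]
    have hmem : ∀ (x : ℕ → A) (t : ℕ), 1 ≤ t → t ≤ L → x t ∈ word x (0 + 1) L :=
      fun x t h₁ h₂ => List.mem_map.2 ⟨t - 1, List.mem_range.2 (by omega), by congr 1; omega⟩
    have := one_le_LCS (hω.1 ▸ hmem (fun t => X t ω) i hi hiL)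
      (hω.2 ▸ hmem (fun t => Y t ω) j hj hjL)
    dsimp only
    exact_mod_cast this
  · rw [Set.indicator_of_notMem hω]
    exact Nat.cast_nonneg _

end LCSBlockMean

section StateLaw

open Matrix

variable {Ω S A : Type*} [MeasurableSpace Ω] [Fintype S] [MeasurableSpace S]
  [MeasurableSingletonClass S] {ℙ : Measure Ω} {Z : ℕ → Ω → S} {X Y : ℕ → Ω → A}
  {P : Matrix S S ℝ} {e : S → A → A → ℝ}

variable (ℙ Z) in
def stateLaw (n : ℕ) (s : S) : ℝ := ℙ.real (Z n ⁻¹' {s})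

theorem sum_stateLaw [IsProbabilityMeasure ℙ] (hZ : ∀ n, Measurable (Z n)) (n : ℕ) :
    ∑ s, stateLaw ℙ Z n s = 1 := by
  simpa [stateLaw] using sum_measureReal_inter_preimage_singleton (μ := ℙ) (hZ n) Set.univ

namespace IsHiddenMarkov

variable [DecidableEq S] (h : IsHiddenMarkov ℙ Z X Y P e) (hZ : ∀ n, Measurable (Z n))
  (hP : P ∈ rowStochastic ℝ S)
include h hZ hP

theorem stateLaw_succ [IsFiniteMeasure ℙ] (n : ℕ) :
    stateLaw ℙ Z (n + 2) = stateLaw ℙ Z (n + 1) ᵥ* P := by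
  ext s'
  rw [stateLaw, ← sum_measureReal_inter_preimage_singleton (hZ (n + 1))]
  refine Finset.sum_congr rfl fun s _ => ?_
  have := h.transition n s s' Set.univ
  rw [Set.preimage_univ, Set.inter_univ] at this
  rw [measureReal_def, show Z (n + 2) ⁻¹' {s'} ∩ Z (n + 1) ⁻¹' {s} =
    {ω | Z (n + 2) ω = s'} ∩ {ω | Z (n + 1) ω = s} from rfl, this, ENNReal.toReal_mul,
    ENNReal.toReal_ofReal (nonneg_of_mem_rowStochastic hP), mul_comm]
  rfl

theorem stateLaw_add [IsFiniteMeasure ℙ] (m k : ℕ) :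
    stateLaw ℙ Z (m + 1 + k) = stateLaw ℙ Z (m + 1) ᵥ* P ^ k := by
  induction k with
  | zero => simp
  | succ k ih =>
    rw [show m + 1 + (k + 1) = m + k + 2 by omega, h.stateLaw_succ hZ hP,
      show m + k + 1 = m + 1 + k by omega, ih, vecMul_vecMul, pow_succ]

theorem le_stateLaw [IsProbabilityMeasure ℙ] {k : ℕ} {ε : ℝ} (hPk : ∀ s t, ε ≤ (P ^ k) s t)
    (m : ℕ) (s' : S) : ε ≤ stateLaw ℙ Z (m + 1 + k) s' := by
  rw [h.stateLaw_add hZ hP]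
  calc ε = ∑ s, stateLaw ℙ Z (m + 1) s * ε := by rw [← Finset.sum_mul, sum_stateLaw hZ, one_mul]
    _ ≤ _ := Finset.sum_le_sum fun s _ => mul_le_mul_of_nonneg_left (hPk s s') measureReal_nonneg

variable [Fintype A] [DecidableEq A] [MeasurableSpace A] [MeasurableSingletonClass A]
  (hX : ∀ n, Measurable (X n)) (hY : ∀ n, Measurable (Y n)) (he₀ : ∀ s x y, 0 ≤ e s x y)
include hX hY he₀

theorem blockMean_eq_dotProduct [IsFiniteMeasure ℙ] (m n : ℕ) :
    blockMean ℙ X Y m n = stateLaw ℙ Z (m + 1) ⬝ᵥ lcsMean P e n := by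
  have hblock : Measurable (block Z X Y m n) :=
    measurable_pi_lambda _ fun _ => (hZ _).prodMk ((hX _).prodMk (hY _))
  have := h.sum_mul_measureReal_inter_block hZ hP he₀ n m Set.univ fun v => (pathLCS v : ℝ)
  simp only [Set.preimage_univ, Set.univ_inter] at this
  rw [blockMean]
  simp only [word_eq_ofFn]
  exact (integral_comp_eq_sum hblock fun v => (pathLCS v : ℝ)).trans this

theorem blockMean_sub_le [IsProbabilityMeasure ℙ] {n : ℕ} {C : ℝ}
    (hC : ∀ s s', lcsMean P e n s - lcsMean P e n s' ≤ C) (m : ℕ) :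
    blockMean ℙ X Y 0 n - blockMean ℙ X Y m n ≤ C := by
  have := sum_sub_mul_le_of_le (ε := 0) (fun _ => measureReal_nonneg)
    (fun _ => measureReal_nonneg) (sum_stateLaw (ℙ := ℙ) hZ 1)
    (sum_stateLaw (ℙ := ℙ) hZ (m + 1)) hC
  rw [zero_mul, sub_zero, one_mul] at this
  rw [h.blockMean_eq_dotProduct hZ hP hX hY he₀, h.blockMean_eq_dotProduct hZ hP hX hY he₀,
    dotProduct, dotProduct, ← Finset.sum_sub_distrib]
  simp only [sub_mul] at this ⊢
  exact this

theorem mul_blockMean_le [IsProbabilityMeasure ℙ] (he₁ : ∀ s, ∑ x, ∑ y, e s x y = 1)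
    {k : ℕ} {ε : ℝ} (hε : 0 ≤ ε) (hPk : ∀ s t, ε ≤ (P ^ k) s t) (m n : ℕ) :
    ε * blockMean ℙ X Y 0 n ≤ blockMean ℙ X Y (m + k) n := by
  rw [h.blockMean_eq_dotProduct hZ hP hX hY he₀, h.blockMean_eq_dotProduct hZ hP hX hY he₀,
    show m + k + 1 = m + 1 + k by omega, dotProduct, dotProduct, Finset.mul_sum]
  refine Finset.sum_le_sum fun s _ => ?_
  have hF := lcsMean_nonneg hP he₀ he₁ n s
  calc ε * (stateLaw ℙ Z (0 + 1) s * lcsMean P e n s) ≤ ε * lcsMean P e n s :=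
        mul_le_mul_of_nonneg_left (mul_le_of_le_one_left hF measureReal_le_one) hε
    _ ≤ _ := mul_le_mul_of_nonneg_right (h.le_stateLaw hZ hP hPk m s) hF

theorem blockMean_add_sub_le [IsProbabilityMeasure ℙ] {n : ℕ} {C : ℝ}
    (hC : ∀ s s', lcsMean P e n s - lcsMean P e n s' ≤ C) (m : ℕ) :
    blockMean ℙ X Y 0 m + blockMean ℙ X Y 0 n - C ≤ blockMean ℙ X Y 0 (m + n) := by
  have := blockMean_add_le (ℙ := ℙ) hX hY 0 m n
  rw [zero_add] at this
  linarith [h.blockMean_sub_le hZ hP hX hY he₀ hC m]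

theorem blockMean_add_mul_le [IsProbabilityMeasure ℙ] (he₁ : ∀ s, ∑ x, ∑ y, e s x y = 1)
    {k : ℕ} {ε : ℝ} (hε : 0 ≤ ε) (hPk : ∀ s t, ε ≤ (P ^ k) s t) (m n : ℕ) :
    blockMean ℙ X Y 0 m + ε * blockMean ℙ X Y 0 n ≤ blockMean ℙ X Y 0 (m + (k + n)) := by
  have h₁ := blockMean_add_le (ℙ := ℙ) hX hY 0 m (k + n)
  have h₂ := blockMean_add_le (ℙ := ℙ) hX hY m k n
  rw [zero_add] at h₁
  linarith [h.mul_blockMean_le hZ hP hX hY he₀ he₁ hε hPk m n,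
    blockMean_nonneg (ℙ := ℙ) (X := X) (Y := Y) m k]

end IsHiddenMarkov

end StateLaw

theorem exists_tendsto_div_of_add_sub_le {a : ℕ → ℝ} {C : ℝ}
    (ha : ∀ m n, a m + a n - C ≤ a (m + n)) (hle : ∀ n, a n ≤ n) :
    ∃ γ, γ ≤ 1 ∧ (∀ n ≠ 0, (a n - C) / n ≤ γ) ∧ Tendsto (fun n => a n / n) atTop (nhds γ) := by
  have hsub : Subadditive fun n => C - a n := fun m n => by linarith [ha m n]
  have hbdd : BddBelow (Set.range fun n : ℕ => (C - a n) / n) := by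
    refine ⟨-|C| - 1, ?_⟩
    rintro _ ⟨n, rfl⟩
    dsimp only
    rcases Nat.eq_zero_or_pos n with rfl | hn
    · rw [Nat.cast_zero, div_zero]
      linarith [abs_nonneg C]
    · have hn' : (1 : ℝ) ≤ n := by exact_mod_cast hn
      rw [le_div_iff₀ (by linarith)]
      nlinarith [neg_abs_le C, abs_nonneg C, hle n]
  have hlim : Tendsto (fun n => a n / n) atTop (nhds (-hsub.lim)) := by
    have := (tendsto_const_div_atTop_nhds_zero_nat C).sub (hsub.tendsto_lim hbdd)
    rw [zero_sub] at this
    refine this.congr fun n => ?_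
    rw [← sub_div]
    ring
  refine ⟨-hsub.lim, le_of_tendsto' hlim fun n => ?_, fun n hn => ?_, hlim⟩
  · rcases Nat.eq_zero_or_pos n with rfl | hn
    · simp
    · exact div_le_one_of_le₀ (hle n) (Nat.cast_nonneg n)
  · have := hsub.lim_le_div hbdd hn
    rw [le_neg, ← neg_div, neg_sub]
    exact this

theorem pos_of_forall_add_le {a : ℕ → ℝ} {C γ c : ℝ} {N : ℕ} (hc : 0 < c) (h₀ : 0 ≤ a 0)
    (hstep : ∀ m, a m + c ≤ a (m + N)) (hγ : ∀ n ≠ 0, (a n - C) / n ≤ γ) : 0 < γ := by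
  have hN : N ≠ 0 := by
    rintro rfl
    linarith [hstep 0]
  have hmul : ∀ r : ℕ, r * c ≤ a (r * N) := by
    intro r
    induction r with
    | zero => simpa using h₀
    | succ r ih =>
      rw [Nat.succ_mul]
      push_cast
      linarith [hstep (r * N)]
  obtain ⟨r, hr⟩ := exists_nat_gt (C / c)
  have hrN : (r + 1) * N ≠ 0 := Nat.mul_ne_zero (Nat.succ_ne_zero r) hN
  refine lt_of_lt_of_le (div_pos ?_ (by exact_mod_cast Nat.pos_of_ne_zero hrN)) (hγ _ hrN)
  have := hmul (r + 1)
  rw [div_lt_iff₀ hc] at hr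
  push_cast at this
  linarith

/-- Mean convergence for a hidden Markov model: if `(Z, (X, Y))` is an HMM whose
hidden chain `Z` is a finite-state, aperiodic, irreducible, time-homogeneous Markov
chain (equivalently, all entries of some power `P^k` are bounded below by some
`ε > 0`), and some letter `a` satisfies `P(X_i = Y_j = a) > 0` for some `i, j ≥ 1`,
then `E[LC_n]/n` converges to some `γ* ∈ (0, 1]`. -/
theorem hmm_lcs_mean_convergence
    {Ω S A : Type*} [MeasurableSpace Ω]
    [Fintype S] [DecidableEq S] [MeasurableSpace S] [MeasurableSingletonClass S]
    [Fintype A] [DecidableEq A] [MeasurableSpace A] [MeasurableSingletonClass A]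
    (ℙ : Measure Ω) [IsProbabilityMeasure ℙ]
    (Z : ℕ → Ω → S) (X Y : ℕ → Ω → A)
    (hZ : ∀ n, Measurable (Z n)) (hX : ∀ n, Measurable (X n)) (hY : ∀ n, Measurable (Y n))
    (P : S → S → ℝ) (e : S → A → A → ℝ)
    (hProw : ∀ s, ∑ s', P s s' = 1) (hPnn : ∀ s s', 0 ≤ P s s')
    (herow : ∀ s, ∑ x, ∑ y, e s x y = 1) (henn : ∀ s x y, 0 ≤ e s x y)
    -- `Z` is a time-homogeneous Markov chain with transition matrix `P`
    (hmarkov : ∀ (n : ℕ) (z z' : S) (B : Set (Fin (n + 1) → S × A × A)),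
      ℙ ({ω | Z (n + 2) ω = z'} ∩ ({ω | Z (n + 1) ω = z} ∩
          {ω | (fun i : Fin (n + 1) => (Z (↑i + 1) ω, X (↑i + 1) ω, Y (↑i + 1) ω)) ∈ B}))
        = ENNReal.ofReal (P z z') *
          ℙ ({ω | Z (n + 1) ω = z} ∩
            {ω | (fun i : Fin (n + 1) => (Z (↑i + 1) ω, X (↑i + 1) ω, Y (↑i + 1) ω)) ∈ B}))
    -- each `Z_n` emits the pair `(X_n, Y_n)` according to `e`, independently of the past
    (hemit : ∀ (n : ℕ) (x y : A) (z : S) (B : Set (Fin n → S × A × A)),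
      ℙ ({ω | X (n + 1) ω = x ∧ Y (n + 1) ω = y} ∩ ({ω | Z (n + 1) ω = z} ∩
          {ω | (fun i : Fin n => (Z (↑i + 1) ω, X (↑i + 1) ω, Y (↑i + 1) ω)) ∈ B}))
        = ENNReal.ofReal (e z x y) *
          ℙ ({ω | Z (n + 1) ω = z} ∩
            {ω | (fun i : Fin n => (Z (↑i + 1) ω, X (↑i + 1) ω, Y (↑i + 1) ω)) ∈ B}))
    -- aperiodicity and irreducibility: all entries of some power of `P` are `≥ ε > 0`
    (hirr : ∃ k : ℕ, 1 ≤ k ∧ ∃ ε : ℝ, 0 < ε ∧ ∀ s s' : S, ε ≤ ((Matrix.of P) ^ k) s s')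
    -- some common letter is emitted with positive probability
    (hpos : ∃ (a : A) (i j : ℕ), 1 ≤ i ∧ 1 ≤ j ∧ 0 < ℙ {ω | X i ω = a ∧ Y j ω = a}) :
    ∃ γ : ℝ, 0 < γ ∧ γ ≤ 1 ∧
      Tendsto (fun n : ℕ =>
          (∫ ω, ((LCS (word (fun i => X i ω) 1 n) (word (fun i => Y i ω) 1 n) : ℝ)) ∂ℙ) / n)
        atTop (nhds γ) := by
  obtain ⟨k, hk, ε, hε, hPk⟩ := hirr
  obtain ⟨a, i, j, hi, hj, hpos⟩ := hpos
  have hP : Matrix.of P ∈ Matrix.rowStochastic ℝ S :=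
    Matrix.mem_rowStochastic_iff_sum.2 ⟨hPnn, hProw⟩
  have h : IsHiddenMarkov ℙ Z X Y (Matrix.of P) e := ⟨hmarkov, hemit⟩
  obtain ⟨C, hC⟩ := exists_lcsMean_sub_le hP henn herow hk hε hPk
  obtain ⟨γ, hγ₁, hγ, hlim⟩ := exists_tendsto_div_of_add_sub_le
    (fun m n => h.blockMean_add_sub_le hZ hP hX hY henn (hC n) m) (blockMean_le 0)
  have hδ : 0 < ℙ.real {ω | X i ω = a ∧ Y j ω = a} :=
    ENNReal.toReal_pos hpos.ne' (measure_ne_top _ _)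
  have hstep (m : ℕ) : blockMean ℙ X Y 0 m + ε * ℙ.real {ω | X i ω = a ∧ Y j ω = a} ≤
      blockMean ℙ X Y 0 (m + (k + max i j)) := by
    have hδL := measureReal_le_blockMean (ℙ := ℙ) hX hY (a := a) hi hj (le_max_left i j)
      (le_max_right i j)
    linarith [mul_le_mul_of_nonneg_left hδL hε.le,
      h.blockMean_add_mul_le hZ hP hX hY henn herow hε.le hPk m (max i j)]
  exact ⟨γ, pos_of_forall_add_le (mul_pos hε hδ) (blockMean_nonneg 0 0) hstep hγ, hγ₁, hlim⟩
end

section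
/- With B_{k,n} = ∪_{r=k}^{⌈2kn/(2n-1)⌉} B_{k,n}^r as above, for all sufficiently large k (in particular k > n ≥ 2), |B_{k,n}| ≤ exp(10 k ln n). -/
/-- `(ν, τ)` (encoded as functions `ℕ → ℕ`, with entries `ν 0, …, ν r` representing
`ν₁, …, ν_{r+1}` and pinned to `kn+1` from index `r` on) is an `r`-partition for
words of length `kn`. -/
def IsRPartition (n k r : ℕ) (ν τ : ℕ → ℕ) : Prop :=
  ν 0 = 1 ∧ τ 0 = 1 ∧ Monotone ν ∧ Monotone τ ∧
  (∀ i, r ≤ i → ν i = k * n + 1) ∧ (∀ i, r ≤ i → τ i = k * n + 1) ∧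
  (∀ j : ℕ, j + 1 < r →
    (ν (j + 1) - ν j) + (τ (j + 1) - τ j) = 2 * n - 1 ∨
    (ν (j + 1) - ν j) + (τ (j + 1) - τ j) = 2 * n) ∧
  (∀ j : ℕ, j + 1 = r → (ν (j + 1) - ν j) + (τ (j + 1) - τ j) < 2 * n)

/-!
A partition `(ν, τ)` with `r` blocks is determined by `r` and its increments
`ν (j + 1) - ν j`, `τ (j + 1) - τ j` for `j < r`, each of which is at most `2n`. Hence there are
at most `(R + 1) (2n + 1)^(2R)` such partitions with `r ≤ R`. For
`R = ⌈2kn / (2n - 1)⌉ ≤ 4k/3 + 1` and `k ≥ 16` this is at most `n^(10k)`.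
-/

namespace IsRPartition

variable {n k r : ℕ} {ν τ : ℕ → ℕ}

theorem increment_le (h : IsRPartition n k r ν τ) (j : ℕ) :
    (ν (j + 1) - ν j) + (τ (j + 1) - τ j) ≤ 2 * n := by
  obtain ⟨-, -, -, -, hν, hτ, hblock, hlast⟩ := h
  rcases lt_trichotomy (j + 1) r with hj | hj | hj
  · rcases hblock j hj with e | e <;> omega
  · exact (hlast j hj).le
  · rw [hν j (by omega), hν (j + 1) hj.le, hτ j (by omega), hτ (j + 1) hj.le]
    omega

theorem eq_of_increments {ν' τ' : ℕ → ℕ}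
    (h : IsRPartition n k r ν τ) (h' : IsRPartition n k r ν' τ')
    (hν : ∀ j < r, ν (j + 1) - ν j = ν' (j + 1) - ν' j)
    (hτ : ∀ j < r, τ (j + 1) - τ j = τ' (j + 1) - τ' j) :
    ν = ν' ∧ τ = τ' := by
  obtain ⟨hν0, hτ0, hνm, hτm, hνr, hτr, -, -⟩ := h
  obtain ⟨hν0', hτ0', hνm', hτm', hνr', hτr', -, -⟩ := h'
  have key : ∀ i, ν i = ν' i ∧ τ i = τ' i := by
    intro i
    induction i with
    | zero => exact ⟨hν0.trans hν0'.symm, hτ0.trans hτ0'.symm⟩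
    | succ i ih =>
      by_cases hir : r ≤ i + 1
      · rw [hνr _ hir, hνr' _ hir, hτr _ hir, hτr' _ hir]
        exact ⟨rfl, rfl⟩
      · have := hν i (by omega)
        have := hτ i (by omega)
        have : ν i ≤ ν (i + 1) := hνm (by omega)
        have : ν' i ≤ ν' (i + 1) := hνm' (by omega)
        have : τ i ≤ τ (i + 1) := hτm (by omega)
        have : τ' i ≤ τ' (i + 1) := hτm' (by omega)
        omega
  exact ⟨funext fun i => (key i).1, funext fun i => (key i).2⟩

end IsRPartition

/-- The clamping is harmless on partitions with `r ≤ R`, by `increment_le`. -/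
def rPartitionCode (n R : ℕ) (q : ℕ × (ℕ → ℕ) × (ℕ → ℕ)) :
    Fin (R + 1) × (Fin R → Fin (2 * n + 1) × Fin (2 * n + 1)) :=
  (Fin.clamp q.1 R, fun j =>
    (Fin.clamp (q.2.1 (j + 1) - q.2.1 j) (2 * n), Fin.clamp (q.2.2 (j + 1) - q.2.2 j) (2 * n)))

theorem injOn_rPartitionCode (n k R : ℕ) :
    Set.InjOn (rPartitionCode n R) {q | q.1 ≤ R ∧ IsRPartition n k q.1 q.2.1 q.2.2} := by
  rintro ⟨r, ν, τ⟩ ⟨hrR, hP⟩ ⟨r', ν', τ'⟩ ⟨hrR', hP'⟩ hcode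
  dsimp only at hrR hP hrR' hP'
  simp only [rPartitionCode, Prod.mk.injEq, Fin.ext_iff, Fin.coe_clamp, funext_iff] at hcode
  obtain ⟨hr, hincr⟩ := hcode
  obtain rfl : r = r' := by omega
  have hsame : ∀ j < r, ν (j + 1) - ν j = ν' (j + 1) - ν' j ∧
      τ (j + 1) - τ j = τ' (j + 1) - τ' j := fun j hj => by
    have := hincr ⟨j, by omega⟩
    dsimp only at this
    have := hP.increment_le j
    have := hP'.increment_le j
    omega
  obtain ⟨rfl, rfl⟩ :=
    hP.eq_of_increments hP' (fun j hj => (hsame j hj).1) fun j hj => (hsame j hj).2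
  rfl

theorem ncard_le_of_subset_rPartitions {n k R : ℕ} {s : Set (ℕ × (ℕ → ℕ) × (ℕ → ℕ))}
    (hs : s ⊆ {q | q.1 ≤ R ∧ IsRPartition n k q.1 q.2.1 q.2.2}) :
    s.ncard ≤ (R + 1) * (2 * n + 1) ^ (2 * R) := by
  calc s.ncard
      ≤ (Set.univ : Set (Fin (R + 1) × (Fin R → Fin (2 * n + 1) × Fin (2 * n + 1)))).ncard :=
        Set.ncard_le_ncard_of_injOn _ (fun _ _ => Set.mem_univ _)
          ((injOn_rPartitionCode n k R).mono hs) Set.finite_univ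
    _ = (R + 1) * (2 * n + 1) ^ (2 * R) := by
        simp [Set.ncard_univ, Nat.card_eq_fintype_card, pow_mul, sq]

theorem three_mul_ceil_le (n k : ℕ) (hn : 2 ≤ n) :
    3 * ⌈(2 * k * n : ℚ) / (2 * n - 1)⌉₊ ≤ 4 * k + 2 := by
  have hn' : (2 : ℚ) ≤ n := by exact_mod_cast hn
  have hden : (0 : ℚ) < 2 * n - 1 := by linarith
  have hratio : (2 * k * n : ℚ) / (2 * n - 1) ≤ 4 * k / 3 := by
    rw [div_le_div_iff₀ hden (by norm_num)]
    nlinarith [(k.cast_nonneg : (0 : ℚ) ≤ k)]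
  have hceil := Nat.ceil_lt_add_one (div_nonneg (by positivity) hden.le :
    (0 : ℚ) ≤ (2 * k * n : ℚ) / (2 * n - 1))
  have : ((3 * ⌈(2 * k * n : ℚ) / (2 * n - 1)⌉₊ : ℕ) : ℚ) < (4 * k + 3 : ℕ) := by
    push_cast
    linarith
  exact Nat.lt_succ_iff.mp (by exact_mod_cast this)

theorem succ_mul_pow_le_pow (n k R : ℕ) (hn : 2 ≤ n) (hk : 16 ≤ k) (hR : 3 * R ≤ 4 * k + 2) :
    (R + 1) * (2 * n + 1) ^ (2 * R) ≤ n ^ (10 * k) := by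
  have hbase : (2 * n + 1) ^ 2 ≤ n ^ 6 := by
    have : 2 ^ 4 ≤ n ^ 4 := Nat.pow_le_pow_left hn 4
    nlinarith [show n ^ 6 = n ^ 4 * n ^ 2 by ring]
  have hpow : (2 * n + 1) ^ (2 * R) ≤ n ^ (8 * k + 4) :=
    calc (2 * n + 1) ^ (2 * R) = ((2 * n + 1) ^ 2) ^ R := pow_mul _ _ _
      _ ≤ (n ^ 6) ^ R := Nat.pow_le_pow_left hbase R
      _ = n ^ (6 * R) := (pow_mul _ _ _).symm
      _ ≤ n ^ (8 * k + 4) := Nat.pow_le_pow_right (by omega) (by omega)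
  have hfactor : R + 1 ≤ n ^ (2 * k - 4) :=
    calc R + 1 ≤ 2 * k := by omega
      _ ≤ 2 ^ (k + 1) := by rw [pow_succ]; linarith [k.lt_two_pow_self]
      _ ≤ 2 ^ (2 * k - 4) := Nat.pow_le_pow_right (by omega) (by omega)
      _ ≤ n ^ (2 * k - 4) := Nat.pow_le_pow_left hn _
  calc (R + 1) * (2 * n + 1) ^ (2 * R)
      ≤ n ^ (2 * k - 4) * n ^ (8 * k + 4) := Nat.mul_le_mul hfactor hpow
    _ = n ^ (10 * k) := by rw [← pow_add]; congr 1; omega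

/-- With `B_{k,n} = ∪_{r=k}^{⌈2kn/(2n-1)⌉} B_{k,n}^r`, for `k > n ≥ 2` and `k`
sufficiently large, `|B_{k,n}| ≤ exp(10 k ln n)`. -/
theorem partition_set_count_bound (n : ℕ) (hn : 2 ≤ n) :
    ∃ k₀ : ℕ, ∀ k : ℕ, k₀ ≤ k → n < k →
      (Set.ncard {q : ℕ × (ℕ → ℕ) × (ℕ → ℕ) |
          k ≤ q.1 ∧ q.1 ≤ ⌈(2 * k * n : ℚ) / (2 * n - 1)⌉₊ ∧
          IsRPartition n k q.1 q.2.1 q.2.2} : ℝ)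
        ≤ Real.exp (10 * k * Real.log n) := by
  refine ⟨16, fun k hk _ => ?_⟩
  rw [mul_comm (10 * (k : ℝ)), ← Real.rpow_def_of_pos (by positivity)]
  have hcount := ncard_le_of_subset_rPartitions
    (s := {q | k ≤ q.1 ∧ q.1 ≤ ⌈(2 * k * n : ℚ) / (2 * n - 1)⌉₊ ∧
      IsRPartition n k q.1 q.2.1 q.2.2}) fun _ hq => hq.2
  exact_mod_cast hcount.trans (succ_mul_pow_le_pow n k _ hn hk (three_mul_ceil_le n k hn))
end

section
/- Suppose a concentration inequality P(LC_N - E[LC_N] ≥ t) ≤ exp(-t²/(A²N)) holds for all t ≥ 0 and all N, and E[LC_{kn}(ν,τ)] ≤ (1/2)⌈2kn/(2n-1)⌉(E[LC_{2n}] + 4nβ(kn)) for every partition (ν,τ) ∈ B_{k,n} with |B_{k,n}| ≤ exp(10 k ln n). Then, choosing t = 2A√10·√(ln n / n), one obtains E[LC_{kn}/(kn)] ≤ t + (1/k)⌈2kn/(2n-1)⌉(E[LC_{2n}]/(2n) + 2β(kn)) + exp(-30 k ln n). -/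
/-!
Off the event that some blockwise score `LC_{kn}(ν, τ)` exceeds its mean by `t`, the score
`LC_{kn}` is at most one of them, hence at most `max_b E[LC_{kn}(ν, τ)] + t`; on that event it is
at most `kn`. A union bound over the at most `exp(10 k ln n)` partitions, each with tail
`exp(-t²/(A² kn)) = exp(-40 k ln n)` for `t = 2A√10·√(ln n / n)·kn`, gives the event probability
at most `exp(-30 k ln n)`.
-/

open MeasureTheory

section

variable {Ω : Type*} [MeasurableSpace Ω] {μ : Measure Ω}

lemma measureReal_iUnion_le_card_mul {ι : Type*} [Fintype ι] {s : ι → Set Ω} {p : ℝ}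
    (hs : ∀ i, μ.real (s i) ≤ p) :
    μ.real (⋃ i, s i) ≤ Fintype.card ι * p :=
  calc μ.real (⋃ i, s i) ≤ ∑ i, μ.real (s i) := measureReal_iUnion_fintype_le s
    _ ≤ ∑ _i : ι, p := Finset.sum_le_sum fun i _ => hs i
    _ = Fintype.card ι * p := by simp

lemma integral_le_add_mul_measureReal [IsProbabilityMeasure μ] {X : Ω → ℝ} {S : Set Ω} {a K : ℝ}
    (hX : Integrable X μ) (hS : MeasurableSet S)
    (hoff : ∀ ω ∉ S, X ω ≤ a) (hon : ∀ ω ∈ S, X ω ≤ a + K) :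
    ∫ ω, X ω ∂μ ≤ a + K * μ.real S := by
  have hind : Integrable (S.indicator fun _ => K) μ := (integrable_const K).indicator hS
  have hpt : ∀ ω, X ω ≤ a + S.indicator (fun _ => K) ω := by
    intro ω
    by_cases hω : ω ∈ S
    · simpa [Set.indicator_of_mem hω] using hon ω hω
    · simpa [Set.indicator_of_notMem hω] using hoff ω hω
  calc ∫ ω, X ω ∂μ ≤ ∫ ω, a + S.indicator (fun _ => K) ω ∂μ :=
        integral_mono hX ((integrable_const a).add hind) hpt
    _ = a + K * μ.real S := by
        rw [integral_add (integrable_const a) hind, integral_indicator_const K hS,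
          integral_const, probReal_univ, one_smul, smul_eq_mul, mul_comm]

lemma integral_le_of_le_exists_of_tail_le [IsProbabilityMeasure μ] {ι : Type*} [Fintype ι]
    {X : Ω → ℝ} {Y : ι → Ω → ℝ} {M t K p : ℝ}
    (hX : Integrable X μ) (hY : ∀ i, Measurable (Y i))
    (hdom : ∀ ω, ∃ i, X ω ≤ Y i ω) (hXK : ∀ ω, X ω ≤ K)
    (hmean : ∀ i, ∫ ω, Y i ω ∂μ ≤ M)
    (htail : ∀ i, μ.real {ω | t ≤ Y i ω - ∫ ω', Y i ω' ∂μ} ≤ p)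
    (hMt : 0 ≤ M + t) (hK : 0 ≤ K) :
    ∫ ω, X ω ∂μ ≤ M + t + K * (Fintype.card ι * p) := by
  set S := ⋃ i, {ω | t ≤ Y i ω - ∫ ω', Y i ω' ∂μ}
  have hS : MeasurableSet S := MeasurableSet.iUnion fun i =>
    measurableSet_le measurable_const ((hY i).sub measurable_const)
  have hoff : ∀ ω ∉ S, X ω ≤ M + t := by
    intro ω hω
    obtain ⟨i, hi⟩ := hdom ω
    have hlt : Y i ω - ∫ ω', Y i ω' ∂μ < t := not_le.mp fun h => hω (Set.mem_iUnion.mpr ⟨i, h⟩)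
    linarith [hmean i]
  calc ∫ ω, X ω ∂μ ≤ M + t + K * μ.real S :=
        integral_le_add_mul_measureReal hX hS hoff fun ω _ => by linarith [hXK ω]
    _ ≤ M + t + K * (Fintype.card ι * p) := by
        gcongr
        exact measureReal_iUnion_le_card_mul htail

end

lemma tail_exponent_eq {A ℓ m k : ℝ} (hA : A ≠ 0) (hℓ : 0 ≤ ℓ) (hm : 0 < m) (hk : k ≠ 0) :
    (2 * A * Real.sqrt 10 * Real.sqrt (ℓ / m) * (k * m)) ^ 2 / (A ^ 2 * (k * m)) = 40 * k * ℓ := by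
  rw [mul_pow, mul_pow, mul_pow, mul_pow, Real.sq_sqrt (by norm_num),
    Real.sq_sqrt (div_nonneg hℓ hm.le)]
  field_simp
  ring

theorem lcs_expectation_partition_bound_general
    {Ω ι : Type*} [MeasurableSpace Ω] [Fintype ι]
    (ℙ : Measure Ω) [IsProbabilityMeasure ℙ]
    (L : Ω → ℝ) (Lb : ι → Ω → ℝ)
    (hLb : ∀ b, Measurable (Lb b))
    (hLint : Integrable L ℙ)
    (A : ℝ) (hA : 0 < A) (n k : ℕ) (hn : 2 ≤ n) (hk : 1 ≤ k)
    (E2n β : ℝ) (hE2n : 0 ≤ E2n) (hβ : 0 ≤ β)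
    -- Hoeffding-type concentration for each `LC_{kn}(ν, τ)`, with `N = kn`
    (hconc : ∀ (b : ι) (t : ℝ), 0 ≤ t →
      (ℙ {ω | t ≤ Lb b ω - ∫ ω', Lb b ω' ∂ℙ}).toReal
        ≤ Real.exp (-t ^ 2 / (A ^ 2 * (k * n))))
    -- blockwise mean bound: `E[LC_{kn}(ν,τ)] ≤ (1/2)⌈2kn/(2n-1)⌉(E[LC_{2n}] + 4nβ(kn))`
    (hmean : ∀ b : ι, ∫ ω, Lb b ω ∂ℙ
      ≤ (1 / 2) * (⌈(2 * (k : ℝ) * n) / (2 * n - 1)⌉ : ℝ) * (E2n + 4 * n * β))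
    -- `|B_{k,n}| ≤ exp(10 k ln n)`
    (hcard : (Fintype.card ι : ℝ) ≤ Real.exp (10 * k * Real.log n))
    -- `LC_{kn}` is attained by (is at most) one of the partitions
    (hmax : ∀ ω, ∃ b, L ω ≤ Lb b ω)
    -- `0 ≤ LC_{kn} ≤ kn`
    (hbound : ∀ ω, L ω ≤ k * n) :
    (∫ ω, L ω ∂ℙ) / (k * n)
      ≤ 2 * A * Real.sqrt 10 * Real.sqrt (Real.log n / n)
        + (1 / k) * (⌈(2 * (k : ℝ) * n) / (2 * n - 1)⌉ : ℝ) * (E2n / (2 * n) + 2 * β)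
        + Real.exp (-(30 : ℝ) * k * Real.log n) := by
  have hn0 : (0 : ℝ) < n := by positivity
  have hkn : (0 : ℝ) < k * n := by positivity
  have hlog : 0 ≤ Real.log n := Real.log_natCast_nonneg n
  set C : ℝ := ((⌈(2 * (k : ℝ) * n) / (2 * n - 1)⌉ : ℤ) : ℝ)
  have hC : 0 ≤ C := by
    have h2n : (2 : ℝ) ≤ n := by exact_mod_cast hn
    have : (0 : ℝ) < 2 * n - 1 := by linarith
    exact Int.cast_nonneg (Int.ceil_nonneg (by positivity))
  set t₀ := 2 * A * Real.sqrt 10 * Real.sqrt (Real.log n / n)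
  have htail : ∀ b, ℙ.real {ω | t₀ * (k * n) ≤ Lb b ω - ∫ ω', Lb b ω' ∂ℙ}
      ≤ Real.exp (-(40 : ℝ) * k * Real.log n) := by
    intro b
    refine (hconc b _ (by positivity)).trans_eq ?_
    rw [neg_div, tail_exponent_eq hA.ne' hlog hn0 (by positivity), neg_mul, neg_mul]
  have hunion : (Fintype.card ι : ℝ) * Real.exp (-(40 : ℝ) * k * Real.log n)
      ≤ Real.exp (-(30 : ℝ) * k * Real.log n) :=
    calc (Fintype.card ι : ℝ) * Real.exp (-(40 : ℝ) * k * Real.log n)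
        ≤ Real.exp (10 * k * Real.log n) * Real.exp (-(40 : ℝ) * k * Real.log n) := by gcongr
      _ = Real.exp (-(30 : ℝ) * k * Real.log n) := by
          rw [← Real.exp_add]; congr 1; ring
  have hint := integral_le_of_le_exists_of_tail_le hLint hLb hmax hbound hmean htail
    (by positivity) hkn.le
  calc (∫ ω, L ω ∂ℙ) / (k * n)
      ≤ ((1 / 2) * C * (E2n + 4 * n * β) + t₀ * (k * n)
          + k * n * (Fintype.card ι * Real.exp (-(40 : ℝ) * k * Real.log n))) / (k * n) := by
        gcongr
    _ = t₀ + (1 / k) * C * (E2n / (2 * n) + 2 * β)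
          + Fintype.card ι * Real.exp (-(40 : ℝ) * k * Real.log n) := by
        field_simp
        ring
    _ ≤ _ := by gcongr

/-- Combining the Hoeffding-type concentration inequality, the blockwise mean bound
over partitions, the bound on the number of partitions, and `LC_{kn} ≤ kn`, one
obtains, with `t = 2A√10·√(ln n / n)`,
`E[LC_{kn}/(kn)] ≤ t + (1/k)⌈2kn/(2n-1)⌉(E[LC_{2n}]/(2n) + 2β(kn)) + exp(-30 k ln n)`.
Here `L = LC_{kn}`, `Lb b = LC_{kn}(ν, τ)` for the partition `b = (ν, τ) ∈ B_{k,n}`,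
`E2n = E[LC_{2n}]` and `β = β(kn)`. -/
theorem lcs_expectation_partition_bound
    {Ω ι : Type*} [MeasurableSpace Ω] [Fintype ι] [Nonempty ι]
    (ℙ : Measure Ω) [IsProbabilityMeasure ℙ]
    (L : Ω → ℝ) (Lb : ι → Ω → ℝ)
    (hL : Measurable L) (hLb : ∀ b, Measurable (Lb b))
    (hLint : Integrable L ℙ) (hLbint : ∀ b, Integrable (Lb b) ℙ)
    (A : ℝ) (hA : 0 < A) (n k : ℕ) (hn : 2 ≤ n) (hk : 1 ≤ k)
    (E2n β : ℝ) (hE2n : 0 ≤ E2n) (hβ : 0 ≤ β)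
    -- Hoeffding-type concentration for each `LC_{kn}(ν, τ)`, with `N = kn`
    (hconc : ∀ (b : ι) (t : ℝ), 0 ≤ t →
      (ℙ {ω | t ≤ Lb b ω - ∫ ω', Lb b ω' ∂ℙ}).toReal
        ≤ Real.exp (-t ^ 2 / (A ^ 2 * (k * n))))
    -- blockwise mean bound: `E[LC_{kn}(ν,τ)] ≤ (1/2)⌈2kn/(2n-1)⌉(E[LC_{2n}] + 4nβ(kn))`
    (hmean : ∀ b : ι, ∫ ω, Lb b ω ∂ℙ
      ≤ (1 / 2) * (⌈(2 * (k : ℝ) * n) / (2 * n - 1)⌉ : ℝ) * (E2n + 4 * n * β))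
    -- `|B_{k,n}| ≤ exp(10 k ln n)`
    (hcard : (Fintype.card ι : ℝ) ≤ Real.exp (10 * k * Real.log n))
    -- `LC_{kn}` is attained by (is at most) one of the partitions
    (hmax : ∀ ω, ∃ b, L ω ≤ Lb b ω)
    -- `0 ≤ LC_{kn} ≤ kn`
    (hnonneg : ∀ ω, 0 ≤ L ω) (hbound : ∀ ω, L ω ≤ k * n) :
    (∫ ω, L ω ∂ℙ) / (k * n)
      ≤ 2 * A * Real.sqrt 10 * Real.sqrt (Real.log n / n)
        + (1 / k) * (⌈(2 * (k : ℝ) * n) / (2 * n - 1)⌉ : ℝ) * (E2n / (2 * n) + 2 * β)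
        + Real.exp (-(30 : ℝ) * k * Real.log n) :=
  lcs_expectation_partition_bound_general ℙ L Lb hLb hLint A hA n k hn hk E2n β hE2n hβ hconc hmean
    hcard hmax hbound
end
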